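/- arXiv:2108.06368 — 5 statements merged into one kernel-verified Lean document; each statement's English description precedes it below -/
import Mathlib

section
/- Let D be a self-adjoint (possibly unbounded) operator on a Hilbert space and H a bounded self-adjoint operator which preserves Dom(D) such that [D,H] extends to a bounded operator with norm b. Then for every z ∈ ℂ \ ℝ and every ψ ∈ Dom(D), the vector (H−z)^{-1}ψ lies in Dom(D) and ‖D(H−z)^{-1}ψ‖ ≤ |Im z|^{-1}‖Dψ‖ + |Im z|^{-2} b (|Im z| + |i+z|) ‖ψ‖, using the identity [H,D](H−z)^{-1} = [H,D](H+i)^{-1}(1 + (i+z)(H−z)^{-1}). -/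
/-!
For `w` with `‖H‖ < ‖w‖` the resolvent `(H - w)⁻¹` is the Neumann series in `w⁻¹ H`, and for
`‖z - w‖ < |Im w|` the resolvent at `z` is the Neumann series in `(z - w) (H - w)⁻¹`. The
commutator bound makes both series converge in the graph norm of `D`, and `D` is closed, so the
resolvents preserve `Dom(D)`; one step of the second kind reaches every non-real `z` from a point
of the first kind. Applying `D` to `(H - z) R ψ = ψ` then gives
`(H - z) D R ψ = D ψ - [D, H] R ψ`, and `|Im z| ‖x‖ ≤ ‖(H - z) x‖` yields
`‖D R ψ‖ ≤ |Im z|⁻¹ ‖D ψ‖ + |Im z|⁻² b ‖ψ‖`, which is the claim since `1 ≤ |Im z| + ‖i + z‖`.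
-/

local notation "⟪" x ", " y "⟫" => @inner ℂ _ _ x y

section
variable {E : Type*} [NormedAddCommGroup E] [InnerProductSpace ℂ E]

theorem ContinuousLinearMap.sub_smul_apply_of_mul_eq_one {H R : E →L[ℂ] E} {w : ℂ}
    (hR : (H - w • 1) * R = 1) (x : E) : H (R x) - w • R x = x := by
  simpa using DFunLike.congr_fun hR x

variable {dom : Submodule ℂ E} {Dop : dom →ₗ[ℂ] E}

theorem mem_of_hasSum_of_hasSum_dop
    (hsymm : ∀ ψ φ : dom, ⟪Dop ψ, (φ : E)⟫ = ⟪(ψ : E), Dop φ⟫)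
    (hmax : ∀ y w : E, (∀ ψ : dom, ⟪Dop ψ, y⟫ = ⟪(ψ : E), w⟫) → y ∈ dom)
    {ι : Type*} {u : ι → dom} {y v : E} (hy : HasSum (fun i => (u i : E)) y)
    (hv : HasSum (fun i => Dop (u i)) v) : y ∈ dom := by
  refine hmax y v fun ψ => ?_
  have h1 := hy.mapL (innerSL ℂ (Dop ψ))
  have h2 := hv.mapL (innerSL ℂ (ψ : E))
  simp only [innerSL_apply_apply, hsymm] at h1 h2
  exact h1.unique h2

variable [CompleteSpace E]

namespace IsSelfAdjoint

variable {H : E →L[ℂ] E}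

theorem abs_im_mul_norm_le_norm_sub_smul (hH : IsSelfAdjoint H) (w : ℂ) (x : E) :
    |w.im| * ‖x‖ ≤ ‖H x - w • x‖ := by
  rcases eq_or_ne x 0 with rfl | hx
  · simp
  have hreal : (⟪x, H x⟫).im = 0 := hH.isSymmetric.im_inner_self_apply x
  have him : (⟪x, H x - w • x⟫).im = -(w.im * ‖x‖ ^ 2) := by
    rw [inner_sub_right, inner_smul_right, inner_self_eq_norm_sq_to_K]
    simp [hreal, ← Complex.ofReal_pow]
  have key : |w.im| * ‖x‖ * ‖x‖ ≤ ‖H x - w • x‖ * ‖x‖ :=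
    calc |w.im| * ‖x‖ * ‖x‖ = |(⟪x, H x - w • x⟫).im| := by
          rw [him, abs_neg, abs_mul, abs_of_nonneg (sq_nonneg ‖x‖)]; ring
      _ ≤ ‖⟪x, H x - w • x⟫‖ := Complex.abs_im_le_norm _
      _ ≤ ‖H x - w • x‖ * ‖x‖ := by rw [mul_comm]; exact norm_inner_le_norm _ _
  exact le_of_mul_le_mul_right key (norm_pos_iff.mpr hx)

theorem norm_le_of_sub_smul_one_mul_eq_one (hH : IsSelfAdjoint H) {w : ℂ} (hw : w.im ≠ 0)
    {R : E →L[ℂ] E} (hR : (H - w • 1) * R = 1) : ‖R‖ ≤ |w.im|⁻¹ := by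
  refine R.opNorm_le_bound (by positivity) fun x => ?_
  rw [inv_mul_eq_div, le_div_iff₀' (abs_pos.mpr hw)]
  simpa [ContinuousLinearMap.sub_smul_apply_of_mul_eq_one hR] using
    hH.abs_im_mul_norm_le_norm_sub_smul w (R x)

theorem isUnit_sub_smul_one (hH : IsSelfAdjoint H) {w : ℂ} (hw : w.im ≠ 0) :
    IsUnit (H - w • 1) := by
  have hw : w ∉ spectrum ℂ H := fun hmem => hw (hH.im_eq_zero_of_mem_spectrum hmem)
  simpa [Algebra.algebraMap_eq_smul_one] using (spectrum.notMem_iff.mp hw).neg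

end IsSelfAdjoint

theorem summable_dop_pow_restrict {T : E →L[ℂ] E} (hT : ∀ x ∈ dom, T x ∈ dom) {α β : ℝ}
    (hα : α < 1) (hT1 : ‖T‖ < 1)
    (hD : ∀ φ : dom, ‖Dop ⟨T φ, hT _ φ.2⟩‖ ≤ α * ‖Dop φ‖ + β * ‖(φ : E)‖) (φ : dom) :
    Summable fun k => Dop (((T : E →ₗ[ℂ] E).restrict hT ^ k) φ) := by
  set Tr := (T : E →ₗ[ℂ] E).restrict hT
  set ρ := max α ((1 + ‖T‖) / 2)
  set K := 2 * |β| / (1 - ‖T‖)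
  have hK : |β| + K * ‖T‖ = K * ((1 + ‖T‖) / 2) := by
    simp only [K]; field_simp [(sub_pos.mpr hT1).ne']; ring
  -- `‖Dop x‖ + K * ‖x‖` is a graph norm in which the restriction of `T` is a contraction
  have hstep : ∀ x : dom, ‖Dop (Tr x)‖ + K * ‖(Tr x : E)‖ ≤ ρ * (‖Dop x‖ + K * ‖(x : E)‖) := by
    intro x
    have h0 : ‖Dop (Tr x)‖ ≤ α * ‖Dop x‖ + β * ‖(x : E)‖ := hD x
    have h1 : K * ‖(Tr x : E)‖ ≤ K * (‖T‖ * ‖(x : E)‖) := by gcongr; exact T.le_opNorm x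
    have h2 : β * ‖(x : E)‖ ≤ |β| * ‖(x : E)‖ := by gcongr; exact le_abs_self β
    have h3 : α * ‖Dop x‖ ≤ ρ * ‖Dop x‖ := by gcongr; exact le_max_left _ _
    have h4 : K * ((1 + ‖T‖) / 2) * ‖(x : E)‖ ≤ K * ρ * ‖(x : E)‖ := by
      gcongr; exact le_max_right _ _
    linear_combination h0 + h1 + h2 + h3 + h4 + ‖(x : E)‖ * hK
  have hρ : ρ < 1 := max_lt hα (by linarith)
  have hρ0 : 0 ≤ ρ := (by positivity : (0 : ℝ) ≤ (1 + ‖T‖) / 2).trans (le_max_right _ _)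
  have hiter : ∀ k, ‖Dop ((Tr ^ k) φ)‖ + K * ‖((Tr ^ k) φ : E)‖
      ≤ ρ ^ k * (‖Dop φ‖ + K * ‖(φ : E)‖) := by
    intro k
    induction k with
    | zero => simp
    | succ k ih =>
      rw [pow_succ' Tr, Module.End.mul_apply, pow_succ' ρ, mul_assoc]
      exact (hstep _).trans (mul_le_mul_of_nonneg_left ih hρ0)
  refine .of_norm_bounded ((summable_geometric_of_lt_one hρ0 hρ).mul_right
    (‖Dop φ‖ + K * ‖(φ : E)‖)) fun k => ?_
  exact (le_add_of_nonneg_right (by positivity)).trans (hiter k)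

theorem apply_mem_of_mul_one_sub_eq_one
    (hsymm : ∀ ψ φ : dom, ⟪Dop ψ, (φ : E)⟫ = ⟪(ψ : E), Dop φ⟫)
    (hmax : ∀ y w : E, (∀ ψ : dom, ⟪Dop ψ, y⟫ = ⟪(ψ : E), w⟫) → y ∈ dom)
    {T : E →L[ℂ] E} (hT : ∀ x ∈ dom, T x ∈ dom) {α β : ℝ} (hα : α < 1) (hT1 : ‖T‖ < 1)
    (hD : ∀ φ : dom, ‖Dop ⟨T φ, hT _ φ.2⟩‖ ≤ α * ‖Dop φ‖ + β * ‖(φ : E)‖)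
    {A : E →L[ℂ] E} (hA : A * (1 - T) = 1) (φ : dom) : A φ ∈ dom := by
  have hgeom : ∑' k, T ^ k = A := by
    rw [← one_mul (∑' k, T ^ k), ← hA, mul_assoc, mul_neg_geom_series T hT1, mul_one]
  have hsum : HasSum (fun k => (T ^ k) (φ : E)) (A φ) :=
    hgeom ▸ (summable_geometric_of_norm_lt_one hT1).hasSum.mapL
      (ContinuousLinearMap.apply ℂ E (φ : E))
  refine mem_of_hasSum_of_hasSum_dop hsymm hmax ?_ (summable_dop_pow_restrict hT hα hT1 hD φ).hasSum
  convert hsum using 2 with k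
  rw [Module.End.pow_restrict]
  simp [Module.End.coe_pow]

variable {H : E →L[ℂ] E} (hpres : ∀ x ∈ dom, H x ∈ dom) {b : ℝ}

theorem abs_im_mul_norm_dop_resolvent_le (hH : IsSelfAdjoint H)
    (hcomm : ∀ ψ : dom, ‖Dop ⟨H ψ, hpres _ ψ.2⟩ - H (Dop ψ)‖ ≤ b * ‖(ψ : E)‖)
    {w : ℂ} {R : E →L[ℂ] E} (hR : (H - w • 1) * R = 1) (hRdom : ∀ φ : dom, R φ ∈ dom)
    (φ : dom) : |w.im| * ‖Dop ⟨R φ, hRdom φ⟩‖ ≤ ‖Dop φ‖ + b * ‖R φ‖ := by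
  set χ : dom := ⟨R φ, hRdom φ⟩
  have hχ : (⟨H χ, hpres _ χ.2⟩ : dom) - w • χ = φ :=
    Subtype.ext (ContinuousLinearMap.sub_smul_apply_of_mul_eq_one hR φ)
  have hDχ : H (Dop χ) - w • Dop χ = Dop φ - (Dop ⟨H χ, hpres _ χ.2⟩ - H (Dop χ)) := by
    rw [← hχ, map_sub, map_smul]; abel
  calc |w.im| * ‖Dop χ‖ ≤ ‖H (Dop χ) - w • Dop χ‖ := hH.abs_im_mul_norm_le_norm_sub_smul w _
    _ ≤ ‖Dop φ‖ + ‖Dop ⟨H χ, hpres _ χ.2⟩ - H (Dop χ)‖ := by rw [hDχ]; exact norm_sub_le _ _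
    _ ≤ ‖Dop φ‖ + b * ‖R φ‖ := by gcongr; exact hcomm χ

theorem norm_dop_resolvent_le (hH : IsSelfAdjoint H)
    (hcomm : ∀ ψ : dom, ‖Dop ⟨H ψ, hpres _ ψ.2⟩ - H (Dop ψ)‖ ≤ b * ‖(ψ : E)‖)
    {w : ℂ} (hw : w.im ≠ 0) {R : E →L[ℂ] E} (hR : (H - w • 1) * R = 1)
    (hRdom : ∀ φ : dom, R φ ∈ dom) (φ : dom) :
    ‖Dop ⟨R φ, hRdom φ⟩‖ ≤ |w.im|⁻¹ * ‖Dop φ‖ + |w.im|⁻¹ ^ 2 * |b| * ‖(φ : E)‖ := by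
  have hRφ : ‖R φ‖ ≤ |w.im|⁻¹ * ‖(φ : E)‖ :=
    R.le_of_opNorm_le (hH.norm_le_of_sub_smul_one_mul_eq_one hw hR) φ
  have hbR : b * ‖R φ‖ ≤ |b| * (|w.im|⁻¹ * ‖(φ : E)‖) :=
    (mul_le_mul_of_nonneg_right (le_abs_self b) (norm_nonneg _)).trans (by gcongr)
  calc ‖Dop ⟨R φ, hRdom φ⟩‖ = |w.im|⁻¹ * (|w.im| * ‖Dop ⟨R φ, hRdom φ⟩‖) := by
        field_simp [abs_pos.mpr hw]
    _ ≤ |w.im|⁻¹ * (‖Dop φ‖ + |b| * (|w.im|⁻¹ * ‖(φ : E)‖)) := by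
        gcongr
        exact (abs_im_mul_norm_dop_resolvent_le hpres hH hcomm hR hRdom φ).trans (by gcongr)
    _ = |w.im|⁻¹ * ‖Dop φ‖ + |w.im|⁻¹ ^ 2 * |b| * ‖(φ : E)‖ := by ring

theorem resolvent_apply_mem_of_norm_lt
    (hsymm : ∀ ψ φ : dom, ⟪Dop ψ, (φ : E)⟫ = ⟪(ψ : E), Dop φ⟫)
    (hmax : ∀ y w : E, (∀ ψ : dom, ⟪Dop ψ, y⟫ = ⟪(ψ : E), w⟫) → y ∈ dom)
    (hcomm : ∀ ψ : dom, ‖Dop ⟨H ψ, hpres _ ψ.2⟩ - H (Dop ψ)‖ ≤ b * ‖(ψ : E)‖)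
    {w : ℂ} (hw : ‖H‖ < ‖w‖) {R : E →L[ℂ] E} (hR : R * (H - w • 1) = 1) (φ : dom) :
    R φ ∈ dom := by
  have hw0 : w ≠ 0 := norm_pos_iff.mp ((norm_nonneg H).trans_lt hw)
  have hT : ∀ x ∈ dom, (w⁻¹ • H) x ∈ dom := fun x hx => dom.smul_mem _ (hpres x hx)
  have hα : ‖w‖⁻¹ * ‖H‖ < 1 := by rwa [inv_mul_lt_one₀ ((norm_nonneg H).trans_lt hw)]
  have hT1 : ‖w⁻¹ • H‖ < 1 := by rwa [norm_smul, norm_inv]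
  have hD : ∀ φ : dom, ‖Dop ⟨(w⁻¹ • H) φ, hT _ φ.2⟩‖
      ≤ (‖w‖⁻¹ * ‖H‖) * ‖Dop φ‖ + (‖w‖⁻¹ * b) * ‖(φ : E)‖ := by
    intro φ
    have e : (⟨(w⁻¹ • H) φ, hT _ φ.2⟩ : dom) = w⁻¹ • ⟨H φ, hpres _ φ.2⟩ := rfl
    rw [e, map_smul, norm_smul, norm_inv, mul_assoc, mul_assoc, ← mul_add]
    gcongr
    calc ‖Dop ⟨H φ, hpres _ φ.2⟩‖
        ≤ ‖H (Dop φ)‖ + ‖Dop ⟨H φ, hpres _ φ.2⟩ - H (Dop φ)‖ := norm_le_insert' _ _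
      _ ≤ ‖H‖ * ‖Dop φ‖ + b * ‖(φ : E)‖ := add_le_add (H.le_opNorm _) (hcomm φ)
  have hA : (-w • R) * (1 - w⁻¹ • H) = 1 := by
    calc (-w • R) * (1 - w⁻¹ • H) = R * (-w • 1 - (-w * w⁻¹) • H) := by
          rw [smul_mul_assoc, ← mul_smul_comm, smul_sub, smul_smul]
      _ = R * (H - w • 1) := by rw [neg_mul, mul_inv_cancel₀ hw0]; congr 1; module
      _ = 1 := hR
  simpa [hw0] using
    dom.smul_mem (-w)⁻¹ (apply_mem_of_mul_one_sub_eq_one hsymm hmax hT hα hT1 hD hA φ)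

theorem resolvent_apply_mem_of_norm_sub_lt
    (hsymm : ∀ ψ φ : dom, ⟪Dop ψ, (φ : E)⟫ = ⟪(ψ : E), Dop φ⟫)
    (hmax : ∀ y w : E, (∀ ψ : dom, ⟪Dop ψ, y⟫ = ⟪(ψ : E), w⟫) → y ∈ dom)
    (hH : IsSelfAdjoint H)
    (hcomm : ∀ ψ : dom, ‖Dop ⟨H ψ, hpres _ ψ.2⟩ - H (Dop ψ)‖ ≤ b * ‖(ψ : E)‖)
    {w z : ℂ} (hwz : ‖z - w‖ < |w.im|) {R' : E →L[ℂ] E} (hR' : (H - w • 1) * R' = 1)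
    (hR'dom : ∀ φ : dom, R' φ ∈ dom) {R : E →L[ℂ] E} (hR : R * (H - z • 1) = 1) (φ : dom) :
    R φ ∈ dom := by
  have hw : w.im ≠ 0 := abs_pos.mp ((norm_nonneg _).trans_lt hwz)
  have hα : ‖z - w‖ * |w.im|⁻¹ < 1 := by
    rwa [← div_eq_mul_inv, div_lt_one (abs_pos.mpr hw)]
  have hT : ∀ x ∈ dom, ((z - w) • R') x ∈ dom := fun x hx => dom.smul_mem _ (hR'dom ⟨x, hx⟩)
  have hT1 : ‖(z - w) • R'‖ < 1 := by
    refine (norm_smul_le _ _).trans_lt (lt_of_le_of_lt ?_ hα)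
    gcongr
    exact hH.norm_le_of_sub_smul_one_mul_eq_one hw hR'
  have hD : ∀ φ : dom, ‖Dop ⟨((z - w) • R') φ, hT _ φ.2⟩‖
      ≤ (‖z - w‖ * |w.im|⁻¹) * ‖Dop φ‖ + (‖z - w‖ * (|w.im|⁻¹ ^ 2 * |b|)) * ‖(φ : E)‖ := by
    intro φ
    have e : (⟨((z - w) • R') φ, hT _ φ.2⟩ : dom) = (z - w) • ⟨R' φ, hR'dom φ⟩ := rfl
    rw [e, map_smul, norm_smul]
    calc ‖z - w‖ * ‖Dop ⟨R' φ, hR'dom φ⟩‖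
        ≤ ‖z - w‖ * (|w.im|⁻¹ * ‖Dop φ‖ + |w.im|⁻¹ ^ 2 * |b| * ‖(φ : E)‖) := by
          gcongr; exact norm_dop_resolvent_le hpres hH hcomm hw hR' hR'dom φ
      _ = _ := by ring
  -- `H - z = (H - w) (1 - (z - w) R')`, so `R (H - w)` inverts `1 - (z - w) R'` from the left
  have hA : (R * (H - w • 1)) * (1 - (z - w) • R') = 1 := by
    calc (R * (H - w • 1)) * (1 - (z - w) • R') = R * (H - w • 1 - (z - w) • 1) := by
          rw [mul_assoc, mul_sub, mul_one, mul_smul_comm, hR']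
      _ = R * (H - z • 1) := by congr 1; module
      _ = 1 := hR
  have hmem := apply_mem_of_mul_one_sub_eq_one hsymm hmax hT hα hT1 hD hA ⟨R' φ, hR'dom φ⟩
  simpa [ContinuousLinearMap.sub_smul_apply_of_mul_eq_one hR'] using hmem

theorem resolvent_apply_mem
    (hsymm : ∀ ψ φ : dom, ⟪Dop ψ, (φ : E)⟫ = ⟪(ψ : E), Dop φ⟫)
    (hmax : ∀ y w : E, (∀ ψ : dom, ⟪Dop ψ, y⟫ = ⟪(ψ : E), w⟫) → y ∈ dom)
    (hH : IsSelfAdjoint H)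
    (hcomm : ∀ ψ : dom, ‖Dop ⟨H ψ, hpres _ ψ.2⟩ - H (Dop ψ)‖ ≤ b * ‖(ψ : E)‖)
    {z : ℂ} (hz : z.im ≠ 0) {R : E →L[ℂ] E} (hR : R * (H - z • 1) = 1) (φ : dom) :
    R φ ∈ dom := by
  -- move `z` vertically by `‖H‖`, into the region where the Neumann series in `H` converges
  set t : ℝ := ‖H‖ / |z.im|
  set w : ℂ := z + (t * z.im : ℝ) * Complex.I
  have ht : t * |z.im| = ‖H‖ := div_mul_cancel₀ _ (abs_pos.mpr hz).ne'
  have hwz : ‖z - w‖ = ‖H‖ := by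
    simp [w, abs_of_nonneg (by positivity : 0 ≤ t), ht]
  have hw : |w.im| = |z.im| + ‖H‖ := by
    have : w.im = (1 + t) * z.im := by simp [w]; ring
    rw [this, abs_mul, abs_of_nonneg (by positivity), add_mul, one_mul, ht]
  have hzpos := abs_pos.mpr hz
  obtain ⟨u, hu⟩ := hH.isUnit_sub_smul_one (w := w) (abs_pos.mp (by rw [hw]; positivity))
  have hR'dom : ∀ φ : dom, (↑u⁻¹ : E →L[ℂ] E) φ ∈ dom :=
    resolvent_apply_mem_of_norm_lt hpres hsymm hmax hcomm
      (by linarith [Complex.abs_im_le_norm w]) (hu ▸ u.inv_mul)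
  exact resolvent_apply_mem_of_norm_sub_lt hpres hsymm hmax hH hcomm (by linarith)
    (hu ▸ u.mul_inv) hR'dom hR φ

end

/-- Let `D` be a (possibly unbounded) self-adjoint operator with domain `dom`, and `H` a
bounded self-adjoint operator preserving `dom` whose commutator with `D` is bounded by `b`.
Then for every non-real `z` and every `ψ ∈ dom`, the vector `(H-z)⁻¹ψ` lies in `dom` and
`‖D (H-z)⁻¹ ψ‖ ≤ |Im z|⁻¹ ‖Dψ‖ + |Im z|⁻² b (|Im z| + |i+z|) ‖ψ‖`. -/
theorem stmt_3 {E : Type*} [NormedAddCommGroup E] [InnerProductSpace ℂ E] [CompleteSpace E]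
    (dom : Submodule ℂ E) (Dop : dom →ₗ[ℂ] E)
    -- `D` is self-adjoint: symmetric and its adjoint domain is contained in `dom`
    (hsymm : ∀ ψ φ : dom, ⟪Dop ψ, (φ : E)⟫ = ⟪(ψ : E), Dop φ⟫)
    (hmax : ∀ y w : E, (∀ ψ : dom, ⟪Dop ψ, y⟫ = ⟪(ψ : E), w⟫) → y ∈ dom)
    (H : E →L[ℂ] E) (hH : IsSelfAdjoint H)
    (hpres : ∀ x ∈ dom, H x ∈ dom)
    (b : ℝ)
    (hcomm : ∀ ψ : dom, ‖Dop ⟨H ψ, hpres _ ψ.2⟩ - H (Dop ψ)‖ ≤ b * ‖(ψ : E)‖)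
    (z : ℂ) (hz : z.im ≠ 0)
    (R : E →L[ℂ] E) (hR1 : (H - z • 1) * R = 1) (hR2 : R * (H - z • 1) = 1) :
    ∀ ψ : dom, ∃ hmem : R (ψ : E) ∈ dom,
      ‖Dop ⟨R (ψ : E), hmem⟩‖ ≤
        |z.im|⁻¹ * ‖Dop ψ‖ + |z.im|⁻¹ ^ 2 * b * (|z.im| + ‖Complex.I + z‖) * ‖(ψ : E)‖ := by
  intro ψ
  have hRdom := resolvent_apply_mem hpres hsymm hmax hH hcomm hz hR2
  refine ⟨hRdom ψ, ?_⟩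
  rcases eq_or_ne ψ 0 with rfl | hψ
  · simp only [ZeroMemClass.coe_zero, map_zero, norm_zero, mul_zero, add_zero]
    exact (norm_eq_zero.mpr (map_zero Dop)).le
  have hb : 0 ≤ b := by
    have := (norm_nonneg _).trans (hcomm ψ)
    exact nonneg_of_mul_nonneg_left this (norm_pos_iff.mpr (by simpa using hψ))
  have hK : 1 ≤ |z.im| + ‖Complex.I + z‖ := by
    have : |(Complex.I + z).im| ≤ ‖Complex.I + z‖ := Complex.abs_im_le_norm _
    rw [Complex.add_im, Complex.I_im] at this
    have h1 := abs_sub (1 + z.im) z.im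
    rw [add_sub_cancel_right, abs_one] at h1
    linarith
  calc ‖Dop ⟨R ψ, hRdom ψ⟩‖ ≤ |z.im|⁻¹ * ‖Dop ψ‖ + |z.im|⁻¹ ^ 2 * |b| * ‖(ψ : E)‖ :=
        norm_dop_resolvent_le hpres hH hcomm hz hR1 hRdom ψ
    _ ≤ _ := by
        rw [abs_of_nonneg hb]
        gcongr _ + ?_ * _
        exact le_mul_of_one_le_right (by positivity) hK
end

section
/- Let D, H be self-adjoint operators on a Hilbert space with H bounded, H preserving Dom(D), and [D,H] bounded, and suppose there exist a bounded positive operator V and g > 0 with H² + V ≥ g²·1. Then for the self-adjoint operator L_κ = [[0, κD − iH],[κD + iH, 0]] one has L_κ² + V⊕V ≥ (g² − κ‖[D,H]‖)·1 as quadratic forms on Dom(D)⊕Dom(D); in particular L_κ² + V⊕V is bounded below by a positive constant whenever κ < g²/‖[D,H]‖. -/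
local notation "⟪" x ", " y "⟫" => @inner ℂ _ _ x y

/-!
Expanding the square, `‖κ D ψ ± i H ψ‖² = κ² ‖D ψ‖² + ‖H ψ‖² ∓ 2κ Im ⟪D ψ, H ψ⟫`, and the
symmetry of `D` and `H` turns the cross term into the expectation of the commutator:
`Im ⟪ψ, [D, H] ψ⟫ = 2 Im ⟪D ψ, H ψ⟫`, so it is at most `κ ‖[D, H]‖ ‖ψ‖²` in absolute value.
Dropping `κ² ‖D ψ‖² ≥ 0` and using `‖H ψ‖² + ⟪ψ, V ψ⟫ ≥ g² ‖ψ‖²` on each component gives the bound.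
-/

section InnerProduct

variable {E : Type*} [NormedAddCommGroup E] [InnerProductSpace ℂ E]

theorem norm_add_I_smul_sq (a b : E) :
    ‖a + Complex.I • b‖ ^ 2 = ‖a‖ ^ 2 + ‖b‖ ^ 2 - 2 * (⟪a, b⟫).im := by
  rw [@norm_add_sq ℂ, inner_smul_right, norm_smul, Complex.norm_I, one_mul]
  simp only [RCLike.re_to_complex, Complex.mul_re, Complex.I_re, Complex.I_im]
  ring

theorem norm_sq_sub_two_abs_im_inner_le_norm_add_I_smul_sq (a b : E) :
    ‖b‖ ^ 2 - 2 * |(⟪a, b⟫).im| ≤ ‖a + Complex.I • b‖ ^ 2 := by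
  rw [norm_add_I_smul_sq]
  nlinarith [sq_nonneg ‖a‖, le_abs_self (⟪a, b⟫).im]

theorem norm_sq_sub_two_abs_im_inner_le_norm_sub_I_smul_sq (a b : E) :
    ‖b‖ ^ 2 - 2 * |(⟪a, b⟫).im| ≤ ‖a - Complex.I • b‖ ^ 2 := by
  simpa [sub_eq_add_neg, ← smul_neg, inner_neg_right] using
    norm_sq_sub_two_abs_im_inner_le_norm_add_I_smul_sq a (-b)

theorem im_inner_real_smul_left (r : ℝ) (a b : E) : (⟪r • a, b⟫).im = r * (⟪a, b⟫).im := by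
  rw [RCLike.real_smul_eq_coe_smul (K := ℂ), inner_smul_real_left, Complex.real_smul,
    Complex.im_ofReal_mul]

theorem ContinuousLinearMap.abs_im_inner_apply_self_le (T : E →L[ℂ] E) (x : E) :
    |(⟪x, T x⟫).im| ≤ ‖T‖ * ‖x‖ ^ 2 :=
  calc |(⟪x, T x⟫).im| ≤ ‖⟪x, T x⟫‖ := Complex.abs_im_le_norm _
    _ ≤ ‖x‖ * ‖T x‖ := norm_inner_le_norm _ _
    _ ≤ ‖x‖ * (‖T‖ * ‖x‖) := by gcongr; exact T.le_opNorm x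
    _ = ‖T‖ * ‖x‖ ^ 2 := by ring

variable [CompleteSpace E]

theorem IsSelfAdjoint.re_inner_sq_add_apply {H : E →L[ℂ] E} (hH : IsSelfAdjoint H)
    (V : E →L[ℂ] E) (x : E) :
    (⟪x, (H ^ 2 + V) x⟫).re = ‖H x‖ ^ 2 + (⟪x, V x⟫).re := by
  have hHH : ⟪x, H (H x)⟫ = ⟪H x, H x⟫ := (hH.isSymmetric x (H x)).symm
  rw [add_apply, inner_add_right, Complex.add_re, pow_two,
    mul_apply_eq_comp, hHH, ← RCLike.re_to_complex, inner_self_eq_norm_sq]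

theorem im_inner_commutator_self {dom : Submodule ℂ E} {Dop : dom →ₗ[ℂ] E}
    (hsymm : ∀ ψ φ : dom, ⟪Dop ψ, (φ : E)⟫ = ⟪(ψ : E), Dop φ⟫)
    {H : E →L[ℂ] E} (hH : IsSelfAdjoint H) (ψ : dom) (hψ : H ψ ∈ dom) :
    (⟪(ψ : E), Dop ⟨H ψ, hψ⟩ - H (Dop ψ)⟫).im = 2 * (⟪Dop ψ, H ψ⟫).im := by
  have hHD : ⟪(ψ : E), H (Dop ψ)⟫ = ⟪H ψ, Dop ψ⟫ := (hH.isSymmetric ψ (Dop ψ)).symm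
  rw [inner_sub_right, ← hsymm ψ ⟨H ψ, hψ⟩, hHD, ← inner_conj_symm (Dop ψ),
    Complex.sub_im, Complex.conj_im]
  ring

end InnerProduct

theorem stmt_5_general {E : Type*} [NormedAddCommGroup E] [InnerProductSpace ℂ E] [CompleteSpace E]
    (dom : Submodule ℂ E) (Dop : dom →ₗ[ℂ] E)
    (hsymm : ∀ ψ φ : dom, ⟪Dop ψ, (φ : E)⟫ = ⟪(ψ : E), Dop φ⟫)
    (H : E →L[ℂ] E) (hH : IsSelfAdjoint H)
    (hpres : ∀ x ∈ dom, H x ∈ dom)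
    (V : E →L[ℂ] E)
    (g : ℝ)
    (hgap : ∀ x : E, g ^ 2 * ‖x‖ ^ 2 ≤ (⟪x, (H ^ 2 + V) x⟫).re)
    (Cop : E →L[ℂ] E)
    (hCop : ∀ ψ : dom, Cop (ψ : E) = Dop ⟨H ψ, hpres _ ψ.2⟩ - H (Dop ψ))
    (κ : ℝ) (hκ : 0 < κ) :
    ∀ ψ φ : dom,
      (g ^ 2 - κ * ‖Cop‖) * (‖(ψ : E)‖ ^ 2 + ‖(φ : E)‖ ^ 2) ≤
        ‖κ • Dop φ - Complex.I • H φ‖ ^ 2 + ‖κ • Dop ψ + Complex.I • H ψ‖ ^ 2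
          + (⟪(ψ : E), V ψ⟫).re + (⟪(φ : E), V φ⟫).re := by
  have hcross : ∀ χ : dom, 2 * |(⟪κ • Dop χ, H χ⟫).im| ≤ κ * ‖Cop‖ * ‖(χ : E)‖ ^ 2 := by
    intro χ
    have hC := Cop.abs_im_inner_apply_self_le χ
    rw [hCop χ, im_inner_commutator_self hsymm hH, abs_mul, abs_two] at hC
    rw [im_inner_real_smul_left, abs_mul, abs_of_pos hκ]
    linarith [mul_le_mul_of_nonneg_left hC hκ.le]
  have hgap' : ∀ x : E, g ^ 2 * ‖x‖ ^ 2 ≤ ‖H x‖ ^ 2 + (⟪x, V x⟫).re := fun x =>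
    hH.re_inner_sq_add_apply V x ▸ hgap x
  intro ψ φ
  linarith [norm_sq_sub_two_abs_im_inner_le_norm_add_I_smul_sq (κ • Dop ψ) (H ψ),
    norm_sq_sub_two_abs_im_inner_le_norm_sub_I_smul_sq (κ • Dop φ) (H φ),
    hcross ψ, hcross φ, hgap' ψ, hgap' φ]

/-- Lower bound for the square of the spectral localizer: if `H² + V ≥ g²·1` with `V ≥ 0`
bounded, then `L_κ² + V⊕V ≥ (g² - κ‖[D,H]‖)·1` as quadratic forms on `dom ⊕ dom`, where
`L_κ = [[0, κD - iH],[κD + iH, 0]]`. -/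
theorem stmt_5 {E : Type*} [NormedAddCommGroup E] [InnerProductSpace ℂ E] [CompleteSpace E]
    (dom : Submodule ℂ E) (Dop : dom →ₗ[ℂ] E)
    (hsymm : ∀ ψ φ : dom, ⟪Dop ψ, (φ : E)⟫ = ⟪(ψ : E), Dop φ⟫)
    (H : E →L[ℂ] E) (hH : IsSelfAdjoint H)
    (hpres : ∀ x ∈ dom, H x ∈ dom)
    (V : E →L[ℂ] E) (hV : V.IsPositive)
    (g : ℝ) (hg : 0 < g)
    (hgap : ∀ x : E, g ^ 2 * ‖x‖ ^ 2 ≤ (⟪x, (H ^ 2 + V) x⟫).re)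
    (Cop : E →L[ℂ] E)
    (hCop : ∀ ψ : dom, Cop (ψ : E) = Dop ⟨H ψ, hpres _ ψ.2⟩ - H (Dop ψ))
    (κ : ℝ) (hκ : 0 < κ) :
    ∀ ψ φ : dom,
      (g ^ 2 - κ * ‖Cop‖) * (‖(ψ : E)‖ ^ 2 + ‖(φ : E)‖ ^ 2) ≤
        ‖κ • Dop φ - Complex.I • H φ‖ ^ 2 + ‖κ • Dop ψ + Complex.I • H ψ‖ ^ 2
          + (⟪(ψ : E), V ψ⟫).re + (⟪(φ : E), V φ⟫).re :=
  stmt_5_general dom Dop hsymm H hH hpres V g hgap Cop hCop κ hκ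
end

section
/- Let A be a C*-algebra, J ⊆ A a closed two-sided ideal, and H ∈ A self-adjoint with a self-adjoint V ∈ J and g > 0 such that H² + V ≥ g²·1 (in the unitization). Then for every continuous function f : ℝ → ℂ supported in [−g/2, g/2], the element f(H) lies in J. -/
/-- Spectral localization in a C*-algebra: if `H` is self-adjoint in a unital C*-algebra
`A`, `J ⊆ A` is a closed two-sided ideal, and `H² + V ≥ g²·1` for some self-adjoint
`V ∈ J` and `g > 0`, then every continuous function `f` supported in `[-g/2, g/2]`
satisfies `f(H) ∈ J`. -/
theorem stmt_6 {A : Type*} [CStarAlgebra A] [PartialOrder A] [StarOrderedRing A]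
    (J : TwoSidedIdeal A) (hJclosed : IsClosed (J : Set A))
    (H : A) (hH : IsSelfAdjoint H)
    (V : A) (hV : IsSelfAdjoint V) (hVJ : V ∈ J)
    (g : ℝ) (hg : 0 < g)
    (hgap : (g ^ 2 : ℝ) • (1 : A) ≤ H ^ 2 + V)
    (f : ℝ → ℂ) (hf : Continuous f)
    (hsupp : ∀ x : ℝ, g / 2 < |x| → f x = 0) :
    cfc (fun z : ℂ => f z.re) H ∈ J := by
  have hHn : IsStarNormal H := hH.isStarNormal
  set a : A := H ^ 2 + V with ha_def
  have ha : IsSelfAdjoint a := (hH.pow 2).add hV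
  -- spectrum of a is contained in [g², ∞)
  have hspec : ∀ x ∈ spectrum ℝ a, g ^ 2 ≤ x := by
    intro x hx
    have hsa : IsSelfAdjoint (a - (g ^ 2 : ℝ) • 1) :=
      ha.sub (IsSelfAdjoint.smul (star_trivial _) (IsSelfAdjoint.one A))
    have h0 : (0 : A) ≤ a - (g ^ 2 : ℝ) • 1 := sub_nonneg.mpr hgap
    have hnn := (StarOrderedRing.nonneg_iff_spectrum_nonneg (R := ℝ) _ hsa).mp h0
    have hmem : x - g ^ 2 ∈ spectrum ℝ (a - (g ^ 2 : ℝ) • 1) := by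
      have h := (spectrum.add_mem_iff (a := a) (r := x - g ^ 2) (s := g ^ 2)).mp
        (by rwa [sub_add_cancel])
      rwa [Algebra.algebraMap_eq_smul_one, neg_add_eq_sub] at h
    linarith [hnn _ hmem]
  have hspec0 : ∀ x ∈ spectrum ℝ a, x ≠ 0 := fun x hx =>
    ne_of_gt (lt_of_lt_of_le (by positivity) (hspec x hx))
  have hTc : ContinuousOn (fun x : ℝ => x⁻¹) (spectrum ℝ a) :=
    ContinuousOn.inv₀ continuousOn_id hspec0
  set T : A := cfc (fun x : ℝ => x⁻¹) a with hT_def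
  have haT : a * T = 1 := by
    conv_lhs => rw [← cfc_id' ℝ a ha]
    rw [← cfc_mul _ _ a (by fun_prop) hTc]
    rw [cfc_congr (g := fun _ : ℝ => 1) (fun x hx => mul_inv_cancel₀ (hspec0 x hx))]
    exact cfc_const_one ℝ a
  have hTa : T * a = 1 := by
    conv_lhs => rw [← cfc_id' ℝ a ha]
    rw [← cfc_mul _ _ a hTc (by fun_prop)]
    rw [cfc_congr (g := fun _ : ℝ => 1) (fun x hx => inv_mul_cancel₀ (hspec0 x hx))]
    exact cfc_const_one ℝ a
  have hTnorm : ‖T‖ ≤ (g ^ 2)⁻¹ := by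
    refine norm_cfc_le (by positivity) fun x hx => ?_
    have h1 : g ^ 2 ≤ x := hspec x hx
    have hx0 : (0:ℝ) < x := lt_of_lt_of_le (by positivity) h1
    rw [Real.norm_eq_abs, abs_of_nonneg (inv_nonneg.mpr hx0.le)]
    exact inv_anti₀ (by positivity) h1
  -- sup of ‖f‖
  obtain ⟨t₀, ht₀mem, ht₀⟩ := (isCompact_Icc (a := -(g/2)) (b := g/2)).exists_isMaxOn
    ⟨0, by constructor <;> [linarith; linarith]⟩ (hf.norm.continuousOn)
  set M : ℝ := ‖f t₀‖ with hM_def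
  have hM0 : 0 ≤ M := norm_nonneg _
  have hfM : ∀ t : ℝ, ‖f t‖ ≤ M := by
    intro t
    by_cases h : |t| ≤ g / 2
    · exact ht₀ (by rw [Set.mem_Icc]; constructor <;> [linarith [abs_le.mp h]; linarith [abs_le.mp h]])
    · rw [hsupp t (not_le.mp h)]; simpa using hM0
  -- key step
  have key : ∀ φ : ℂ → ℂ, Continuous φ →
      cfc φ H - cfc (fun z => φ z * z ^ 2) H * T ∈ J := by
    intro φ hφ
    have h1 : cfc φ H * a = cfc (fun z => φ z * z ^ 2) H + cfc φ H * V := by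
      rw [ha_def, mul_add, ← cfc_pow_id (R := ℂ) H 2,
        ← cfc_mul _ _ H (by fun_prop) (by fun_prop)]
    have h2 : cfc φ H - cfc (fun z => φ z * z ^ 2) H * T = cfc φ H * V * T := by
      have e1 : cfc φ H * a * T = cfc φ H := by rw [mul_assoc, haT, mul_one]
      calc cfc φ H - cfc (fun z => φ z * z ^ 2) H * T
          = cfc φ H * a * T - cfc (fun z => φ z * z ^ 2) H * T := by rw [e1]
        _ = (cfc (fun z => φ z * z ^ 2) H + cfc φ H * V) * T
              - cfc (fun z => φ z * z ^ 2) H * T := by rw [h1]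
        _ = cfc φ H * V * T := by noncomm_ring
    rw [h2]
    exact J.mul_mem_right _ _ (J.mul_mem_left _ _ hVJ)
  -- the sequence
  have hmem : ∀ n, cfc (fun z : ℂ => f z.re) H
      - cfc (fun z : ℂ => f z.re * z ^ (2 * n)) H * T ^ n ∈ J := by
    intro n
    induction n with
    | zero =>
      rw [show (fun z : ℂ => f z.re * z ^ (2 * 0)) = fun z : ℂ => f z.re from
            funext fun z => by norm_num,
          pow_zero, mul_one, sub_self]
      exact J.zero_mem
    | succ n ih =>
      have hstep : cfc (fun z : ℂ => f z.re * z ^ (2 * n)) H * T ^ n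
          - cfc (fun z : ℂ => f z.re * z ^ (2 * (n + 1))) H * T ^ (n + 1) ∈ J := by
        have hk := key (fun z : ℂ => f z.re * z ^ (2 * n)) (by fun_prop)
        have heq : cfc (fun z : ℂ => (f z.re * z ^ (2 * n)) * z ^ 2) H
            = cfc (fun z : ℂ => f z.re * z ^ (2 * (n + 1))) H := by
          refine cfc_congr fun z _ => ?_
          rw [mul_assoc, ← pow_add]
          ring_nf
        rw [heq] at hk
        have heq2 : cfc (fun z : ℂ => f z.re * z ^ (2 * n)) H * T ^ n
            - cfc (fun z : ℂ => f z.re * z ^ (2 * (n + 1))) H * T ^ (n + 1)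
            = (cfc (fun z : ℂ => f z.re * z ^ (2 * n)) H
              - cfc (fun z : ℂ => f z.re * z ^ (2 * (n + 1))) H * T) * T ^ n := by
          rw [sub_mul, mul_assoc, ← pow_succ']
        rw [heq2]
        exact J.mul_mem_right _ _ hk
      have h := J.add_mem ih hstep
      simpa using h
  -- norm bound
  have hbound : ∀ n, ‖cfc (fun z : ℂ => f z.re * z ^ (2 * n)) H * T ^ n‖
      ≤ M * (4 : ℝ)⁻¹ ^ n := by
    intro n
    have h1 : ‖cfc (fun z : ℂ => f z.re * z ^ (2 * n)) H‖ ≤ M * (g / 2) ^ (2 * n) := by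
      refine norm_cfc_le (by positivity) fun z hz => ?_
      have hzre : z = z.re := hH.mem_spectrum_eq_re hz
      rw [norm_mul, norm_pow]
      have hnz : ‖z‖ = |z.re| := by rw [hzre]; simp [Complex.norm_real]
      by_cases h : |z.re| ≤ g / 2
      · refine mul_le_mul (hfM _) ?_ (by positivity) hM0
        rw [hnz]
        exact pow_le_pow_left₀ (abs_nonneg _) h _
      · rw [hsupp _ (not_le.mp h)]
        simp only [norm_zero, zero_mul]
        positivity
    have h2 : ‖T ^ n‖ ≤ ((g ^ 2)⁻¹) ^ n := by
      rw [hT_def, ← cfc_pow _ _ (a := a) hTc ha]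
      refine norm_cfc_le (by positivity) fun x hx => ?_
      have h1 : g ^ 2 ≤ x := hspec x hx
      have hx0 : (0:ℝ) < x := lt_of_lt_of_le (by positivity) h1
      rw [Real.norm_eq_abs, abs_pow, abs_of_nonneg (inv_nonneg.mpr hx0.le)]
      exact pow_le_pow_left₀ (inv_nonneg.mpr hx0.le) (inv_anti₀ (by positivity) h1) _
    calc ‖cfc (fun z : ℂ => f z.re * z ^ (2 * n)) H * T ^ n‖ ≤ ‖cfc (fun z : ℂ => f z.re * z ^ (2 * n)) H‖ * ‖T ^ n‖ := norm_mul_le _ _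
      _ ≤ (M * (g / 2) ^ (2 * n)) * ((g ^ 2)⁻¹) ^ n := by
          exact mul_le_mul h1 h2 (norm_nonneg _) (by positivity)
      _ = M * (4 : ℝ)⁻¹ ^ n := by
          rw [mul_assoc]
          congr 1
          rw [pow_mul, ← mul_pow]
          congr 1
          field_simp
          ring
  -- conclude
  have hu0 : Filter.Tendsto
      (fun n => cfc (fun z : ℂ => f z.re * z ^ (2 * n)) H * T ^ n)
      Filter.atTop (nhds 0) := by
    refine squeeze_zero_norm hbound ?_
    have : Filter.Tendsto (fun n : ℕ => ((4:ℝ)⁻¹) ^ n) Filter.atTop (nhds 0) :=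
      tendsto_pow_atTop_nhds_zero_of_lt_one (by norm_num) (by norm_num)
    simpa using this.const_mul M
  have hlim : Filter.Tendsto (fun n => cfc (fun z : ℂ => f z.re) H
        - cfc (fun z : ℂ => f z.re * z ^ (2 * n)) H * T ^ n)
      Filter.atTop (nhds (cfc (fun z : ℂ => f z.re) H)) := by
    simpa using (tendsto_const_nhds.sub hu0)
  exact hJclosed.mem_of_tendsto hlim (Filter.Eventually.of_forall hmem)
end

section
/- Let D be a self-adjoint invertible operator on a Hilbert space, 0 < ρ < 1, and f(λ) = λ(1+λ²)^{−ρ/2}. If H is a bounded self-adjoint operator preserving Dom(D) with [D,H] bounded, then H preserves Dom(f(D)) ⊇ Dom(D) and [f(D),H] extends to a bounded operator. -/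
/-!
For `s = ρ / 2 ∈ (0, 1)` and `C_s = ∫₀^∞ u^(-s) (1 + u)⁻¹ du`, the substitution
`t = (1 + x²) u` gives `C_s x (1 + x²)^(-s) = ∫₀^∞ t^(-s) x (1 + t + x²)⁻¹ dt`. This passes
through the continuous functional calculus, so `C_s [f(D), H]` is an integral of the commutators
`[D (1 + t + D²)⁻¹, H]`. For `R = (c + D²)⁻¹` one has
`[D R, H] = [D, H] R - (D² R) [D, H] R - (D R) [D, H] (D R)`, and `‖R‖ ≤ c⁻¹`, `‖D² R‖ ≤ 1`,
`‖D R‖ ≤ (2√c)⁻¹` give `‖[D R, H]‖ ≤ 9/4 c⁻¹ ‖[D, H]‖`. Integrated against `t^(-s) dt` with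
`c = 1 + t`, the right-hand side is `9/4 C_s ‖[D, H]‖`.
-/

open MeasureTheory Set

lemma integrableOn_rpow_neg_mul_inv_one_add {s : ℝ} (hs0 : 0 < s) (hs1 : s < 1) :
    IntegrableOn (fun u : ℝ => u ^ (-s) * (1 + u)⁻¹) (Ioi 0) := by
  have hcont : ContinuousOn (fun u : ℝ => u ^ (-s) * (1 + u)⁻¹) (Ioi 0) := fun u (hu : 0 < u) =>
    ContinuousAt.continuousWithinAt <| by fun_prop (disch := first | exact .inl hu.ne' | positivity)
  have hnorm : ∀ u : ℝ, 0 < u → ‖u ^ (-s) * (1 + u)⁻¹‖ = u ^ (-s) * (1 + u)⁻¹ :=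
    fun u hu => Real.norm_of_nonneg (by positivity)
  rw [← Ioc_union_Ioi_eq_Ioi zero_le_one]
  refine IntegrableOn.union ?_ ?_
  · have hint : IntegrableOn (fun u : ℝ => u ^ (-s)) (Ioc 0 1) :=
      (intervalIntegrable_iff_integrableOn_Ioc_of_le zero_le_one).mp
        (intervalIntegral.intervalIntegrable_rpow' (by linarith))
    refine hint.mono' (hcont.mono Ioc_subset_Ioi_self |>.aestronglyMeasurable measurableSet_Ioc) ?_
    filter_upwards [ae_restrict_mem measurableSet_Ioc] with u hu
    have hu0 : 0 < u := hu.1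
    rw [hnorm u hu0]
    exact mul_le_of_le_one_right (by positivity) (inv_le_one_of_one_le₀ (by linarith))
  · have hint : IntegrableOn (fun u : ℝ => u ^ (-s) * u⁻¹) (Ioi 1) := by
      refine (integrableOn_Ioi_rpow_of_lt (by linarith : -s - 1 < -1) one_pos).congr_fun
        (fun u (hu : 1 < u) => ?_) measurableSet_Ioi
      dsimp only
      rw [Real.rpow_sub_one (by positivity : u ≠ 0), div_eq_mul_inv]
    refine hint.mono' (hcont.mono (Ioi_subset_Ioi zero_le_one) |>.aestronglyMeasurable
      measurableSet_Ioi) ?_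
    filter_upwards [ae_restrict_mem measurableSet_Ioi] with u (hu : 1 < u)
    rw [hnorm u (by linarith)]
    gcongr
    linarith

lemma integral_rpow_neg_mul_inv_one_add_pos {s : ℝ} (hs0 : 0 < s) (hs1 : s < 1) :
    0 < ∫ u in Ioi (0 : ℝ), u ^ (-s) * (1 + u)⁻¹ := by
  refine (setIntegral_pos_iff_support_of_nonneg_ae ?_
    (integrableOn_rpow_neg_mul_inv_one_add hs0 hs1)).mpr ?_
  · filter_upwards [ae_restrict_mem measurableSet_Ioi] with u (hu : 0 < u)
    positivity
  · have hsupp : Ioi (0 : ℝ) ⊆ Function.support (fun u : ℝ => u ^ (-s) * (1 + u)⁻¹) ∩ Ioi 0 :=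
      fun u (hu : 0 < u) => ⟨(by positivity : u ^ (-s) * (1 + u)⁻¹ ≠ 0), hu⟩
    exact (by simp : 0 < volume (Ioi (0 : ℝ))).trans_le (measure_mono hsupp)

lemma integral_rpow_neg_mul_inv_add (s : ℝ) {c : ℝ} (hc : 0 < c) :
    ∫ t in Ioi (0 : ℝ), t ^ (-s) * (c + t)⁻¹
      = c ^ (-s) * ∫ u in Ioi (0 : ℝ), u ^ (-s) * (1 + u)⁻¹ := by
  have hsubst := integral_comp_mul_left_Ioi (fun t : ℝ => t ^ (-s) * (c + t)⁻¹) 0 hc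
  have hintegrand : ∀ u ∈ Ioi (0 : ℝ),
      (c * u) ^ (-s) * (c + c * u)⁻¹ = c⁻¹ * (c ^ (-s) * (u ^ (-s) * (1 + u)⁻¹)) :=
    fun u (hu : 0 < u) => by
      rw [Real.mul_rpow hc.le hu.le, show c + c * u = c * (1 + u) by ring, mul_inv]
      ring
  rw [mul_zero, setIntegral_congr_fun measurableSet_Ioi hintegrand, integral_const_mul,
    integral_const_mul, smul_eq_mul] at hsubst
  exact (mul_left_cancel₀ (inv_ne_zero hc.ne') hsubst).symm

lemma lie_mul_eq_of_mul_eq_one {R A : Type*} [CommSemiring R] [Ring A] [Algebra R A]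
    {a r b : A} {c : R}
    (hrp : r * (algebraMap R A c + a ^ 2) = 1) (hpr : (algebraMap R A c + a ^ 2) * r = 1)
    (har : Commute a r) :
    ⁅a * r, b⁆ = ⁅a, b⁆ * r - a ^ 2 * r * (⁅a, b⁆ * r) - a * r * (⁅a, b⁆ * (a * r)) := by
  set p := algebraMap R A c + a ^ 2
  have hp : ⁅b, p⁆ = -(a * ⁅a, b⁆ + ⁅a, b⁆ * a) := by
    simp only [p, Ring.lie_def, mul_add, add_mul, Algebra.commutes c b]
    noncomm_ring
  have hr : ⁅r, b⁆ = r * ⁅b, p⁆ * r := by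
    calc ⁅r, b⁆ = r * b * (p * r) - (r * p) * b * r := by rw [hpr, hrp, Ring.lie_def]; noncomm_ring
      _ = r * ⁅b, p⁆ * r := by rw [Ring.lie_def]; noncomm_ring
  have hara : a * r * a = a ^ 2 * r := by rw [mul_assoc, ← har.eq]; noncomm_ring
  calc ⁅a * r, b⁆ = a * ⁅r, b⁆ + ⁅a, b⁆ * r := by simp only [Ring.lie_def]; noncomm_ring
    _ = _ := by rw [hr, hp]; simp only [mul_neg, neg_mul, mul_add, add_mul, ← hara]; noncomm_ring

lemma abs_mul_inv_add_sq_le {c : ℝ} (hc : 0 < c) (x : ℝ) :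
    |x * (c + x ^ 2)⁻¹| ≤ (2 * √c)⁻¹ := by
  have hcx : 0 < c + x ^ 2 := by positivity
  rw [abs_mul, abs_inv, abs_of_pos hcx, ← div_eq_mul_inv, inv_eq_one_div,
    div_le_div_iff₀ hcx (by positivity), one_mul]
  nlinarith [sq_nonneg (√c - |x|), sq_abs x, Real.sq_sqrt hc.le]

lemma abs_inv_add_sq_le {c : ℝ} (hc : 0 < c) (x : ℝ) : |(c + x ^ 2)⁻¹| ≤ c⁻¹ := by
  rw [abs_inv, abs_of_pos (by positivity)]
  exact inv_anti₀ hc (by nlinarith)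

lemma abs_sq_mul_inv_add_sq_le {c : ℝ} (hc : 0 < c) (x : ℝ) : |x ^ 2 * (c + x ^ 2)⁻¹| ≤ 1 := by
  have hcx : 0 < c + x ^ 2 := by positivity
  rw [abs_of_nonneg (by positivity), ← div_eq_mul_inv, div_le_one hcx]
  linarith

section CStarAlgebra

variable {A : Type*} [CStarAlgebra A] {a : A}

lemma norm_lie_cfc_mul_inv_add_sq_le (ha : IsSelfAdjoint a) {c : ℝ} (hc : 0 < c) (b : A) :
    ‖⁅cfc (fun x : ℝ => x * (c + x ^ 2)⁻¹) a, b⁆‖ ≤ 9 / 4 * c⁻¹ * ‖⁅a, b⁆‖ := by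
  have hne : ∀ x : ℝ, c + x ^ 2 ≠ 0 := fun x => by positivity
  have hcont : Continuous fun x : ℝ => (c + x ^ 2)⁻¹ := by fun_prop (disch := exact hne _)
  set r := cfc (fun x : ℝ => (c + x ^ 2)⁻¹) a
  have hp : algebraMap ℝ A c + a ^ 2 = cfc (fun x : ℝ => c + x ^ 2) a := by
    rw [cfc_const_add c (· ^ 2) a, cfc_pow_id a 2]
  have hrp : r * (algebraMap ℝ A c + a ^ 2) = 1 := by
    rw [hp, ← cfc_mul _ _ a hcont.continuousOn (by fun_prop)]
    simp only [inv_mul_cancel₀ (hne _)]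
    exact cfc_one ℝ a
  have hpr : (algebraMap ℝ A c + a ^ 2) * r = 1 := by
    rw [hp, ← cfc_mul _ _ a (by fun_prop) hcont.continuousOn]
    simp only [mul_inv_cancel₀ (hne _)]
    exact cfc_one ℝ a
  have hcomm : Commute a r := by simpa only [cfc_id' ℝ a] using cfc_commute_cfc (fun x : ℝ => x) _ a
  have har_eq : cfc (fun x : ℝ => x * (c + x ^ 2)⁻¹) a = a * r := by
    rw [cfc_mul _ _ a (by fun_prop) hcont.continuousOn, cfc_id' ℝ a]
  have ha2r_eq : cfc (fun x : ℝ => x ^ 2 * (c + x ^ 2)⁻¹) a = a ^ 2 * r := by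
    rw [cfc_mul _ _ a (by fun_prop) hcont.continuousOn, cfc_pow_id a 2]
  have hr : ‖r‖ ≤ c⁻¹ := norm_cfc_le (by positivity) fun x _ => abs_inv_add_sq_le hc x
  have har : ‖a * r‖ ≤ (2 * √c)⁻¹ :=
    har_eq ▸ norm_cfc_le (by positivity) fun x _ => abs_mul_inv_add_sq_le hc x
  have ha2r : ‖a ^ 2 * r‖ ≤ 1 :=
    ha2r_eq ▸ norm_cfc_le zero_le_one fun x _ => abs_sq_mul_inv_add_sq_le hc x
  have hsqrt : (2 * √c)⁻¹ * (2 * √c)⁻¹ = (4 * c)⁻¹ := by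
    rw [← mul_inv, mul_mul_mul_comm, Real.mul_self_sqrt hc.le]; norm_num
  set B := ⁅a, b⁆
  rw [har_eq, lie_mul_eq_of_mul_eq_one hrp hpr hcomm]
  calc ‖B * r - a ^ 2 * r * (B * r) - a * r * (B * (a * r))‖
      ≤ ‖B‖ * ‖r‖ + ‖a ^ 2 * r‖ * (‖B‖ * ‖r‖) + ‖a * r‖ * (‖B‖ * ‖a * r‖) := by
        refine (norm_sub_le _ _).trans (add_le_add ((norm_sub_le _ _).trans (add_le_add
          (norm_mul_le _ _) ((norm_mul_le _ _).trans ?_))) ((norm_mul_le _ _).trans ?_))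
        · gcongr; exact norm_mul_le _ _
        · gcongr; exact norm_mul_le _ _
    _ ≤ ‖B‖ * c⁻¹ + 1 * (‖B‖ * c⁻¹) + (2 * √c)⁻¹ * (‖B‖ * (2 * √c)⁻¹) := by gcongr
    _ = ‖B‖ * (2 * c⁻¹ + (2 * √c)⁻¹ * (2 * √c)⁻¹) := by ring
    _ = 9 / 4 * c⁻¹ * ‖B‖ := by rw [hsqrt, mul_inv]; ring

lemma continuousOn_uncurry_rpow_neg_mul_mul_inv (s : ℝ) (K : Set ℝ) :
    ContinuousOn (Function.uncurry fun (t x : ℝ) => t ^ (-s) * (x * (1 + t + x ^ 2)⁻¹))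
      (Ioi 0 ×ˢ K) := by
  rintro ⟨t, x⟩ ⟨ht, -⟩
  have ht : 0 < t := ht
  refine ContinuousAt.continuousWithinAt ?_
  fun_prop (disch := first | exact .inl ht.ne' | positivity)

lemma ae_norm_rpow_neg_mul_mul_inv_le (s : ℝ) {K : Set ℝ} {M : ℝ} (hM : ∀ x ∈ K, ‖x‖ ≤ M) :
    ∀ᵐ t ∂(volume.restrict (Ioi (0 : ℝ))), ∀ x ∈ K,
      ‖t ^ (-s) * (x * (1 + t + x ^ 2)⁻¹)‖ ≤ M * (t ^ (-s) * (1 + t)⁻¹) := by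
  filter_upwards [ae_restrict_mem measurableSet_Ioi] with t (ht : 0 < t) x hx
  rw [norm_mul, norm_mul, norm_inv, Real.norm_of_nonneg (by positivity),
    Real.norm_of_nonneg (by positivity : 0 ≤ 1 + t + x ^ 2), mul_left_comm M]
  exact mul_le_mul_of_nonneg_left (mul_le_mul (hM x hx)
    (inv_anti₀ (by positivity) (by nlinarith)) (by positivity) ((norm_nonneg x).trans (hM x hx)))
    (by positivity)

lemma integral_rpow_neg_mul_mul_inv_add (s x : ℝ) :
    ∫ t in Ioi (0 : ℝ), t ^ (-s) * (x * (1 + t + x ^ 2)⁻¹)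
      = (∫ u in Ioi (0 : ℝ), u ^ (-s) * (1 + u)⁻¹) * (x * (1 + x ^ 2) ^ (-s)) := by
  simp_rw [mul_left_comm _ x, add_right_comm 1 _ (x ^ 2)]
  rw [integral_const_mul, integral_rpow_neg_mul_inv_add s (by positivity)]
  ring

lemma integrableOn_cfc_rpow_neg_mul_mul_inv (ha : IsSelfAdjoint a) {s : ℝ} (hs0 : 0 < s)
    (hs1 : s < 1) :
    IntegrableOn (fun t : ℝ => cfc (fun x : ℝ => t ^ (-s) * (x * (1 + t + x ^ 2)⁻¹)) a)
      (Ioi 0) := by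
  obtain ⟨M, hM⟩ := (spectrum.isCompact (𝕜 := ℝ) a).isBounded.exists_norm_le
  exact integrableOn_cfc measurableSet_Ioi _ _ a
    (continuousOn_uncurry_rpow_neg_mul_mul_inv s _) (ae_norm_rpow_neg_mul_mul_inv_le s hM)
    ((integrableOn_rpow_neg_mul_inv_one_add hs0 hs1).const_mul M).hasFiniteIntegral ha

lemma smul_cfc_mul_one_add_sq_rpow_neg_eq_setIntegral (ha : IsSelfAdjoint a) {s : ℝ}
    (hs0 : 0 < s) (hs1 : s < 1) :
    (∫ u in Ioi (0 : ℝ), u ^ (-s) * (1 + u)⁻¹) • cfc (fun x : ℝ => x * (1 + x ^ 2) ^ (-s)) a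
      = ∫ t in Ioi (0 : ℝ), cfc (fun x : ℝ => t ^ (-s) * (x * (1 + t + x ^ 2)⁻¹)) a := by
  obtain ⟨M, hM⟩ := (spectrum.isCompact (𝕜 := ℝ) a).isBounded.exists_norm_le
  have hf : ContinuousOn (fun x : ℝ => x * (1 + x ^ 2) ^ (-s)) (spectrum ℝ a) :=
    (continuous_id.mul <| (continuous_const.add (continuous_pow 2)).rpow_const
      fun x => Or.inl (show (1 : ℝ) + x ^ 2 ≠ 0 by positivity)).continuousOn
  rw [← cfc_setIntegral measurableSet_Ioi _ _ a (continuousOn_uncurry_rpow_neg_mul_mul_inv s _)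
    (ae_norm_rpow_neg_mul_mul_inv_le s hM)
    ((integrableOn_rpow_neg_mul_inv_one_add hs0 hs1).const_mul M).hasFiniteIntegral ha]
  simp only [integral_rpow_neg_mul_mul_inv_add]
  exact (cfc_const_mul _ _ a hf).symm

theorem norm_lie_cfc_mul_one_add_sq_rpow_neg_le (ha : IsSelfAdjoint a) {s : ℝ} (hs0 : 0 < s)
    (hs1 : s < 1) (b : A) :
    ‖⁅cfc (fun x : ℝ => x * (1 + x ^ 2) ^ (-s)) a, b⁆‖ ≤ 9 / 4 * ‖⁅a, b⁆‖ := by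
  set C := ∫ u in Ioi (0 : ℝ), u ^ (-s) * (1 + u)⁻¹
  have hC : 0 < C := integral_rpow_neg_mul_inv_one_add_pos hs0 hs1
  let adR : A →L[ℝ] A := (ContinuousLinearMap.mul ℝ A).flip b - ContinuousLinearMap.mul ℝ A b
  have hadR : ∀ X, adR X = ⁅X, b⁆ := fun X => (Ring.lie_def X b).symm
  have hlie : C • ⁅cfc (fun x : ℝ => x * (1 + x ^ 2) ^ (-s)) a, b⁆
      = ∫ t in Ioi (0 : ℝ), ⁅cfc (fun x : ℝ => t ^ (-s) * (x * (1 + t + x ^ 2)⁻¹)) a, b⁆ := by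
    rw [← hadR, ← adR.map_smul, smul_cfc_mul_one_add_sq_rpow_neg_eq_setIntegral ha hs0 hs1,
      ← adR.integral_comp_comm (integrableOn_cfc_rpow_neg_mul_mul_inv ha hs0 hs1)]
    simp only [hadR]
  have hterm : ∀ t ∈ Ioi (0 : ℝ),
      ‖⁅cfc (fun x : ℝ => t ^ (-s) * (x * (1 + t + x ^ 2)⁻¹)) a, b⁆‖
        ≤ 9 / 4 * ‖⁅a, b⁆‖ * (t ^ (-s) * (1 + t)⁻¹) := fun t (ht : 0 < t) => by
    rw [cfc_const_mul _ _ a (by fun_prop (disch := intros; positivity)), ← hadR, adR.map_smul, hadR,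
      norm_smul, Real.norm_of_nonneg (by positivity)]
    calc t ^ (-s) * ‖⁅cfc (fun x : ℝ => x * (1 + t + x ^ 2)⁻¹) a, b⁆‖
        ≤ t ^ (-s) * (9 / 4 * (1 + t)⁻¹ * ‖⁅a, b⁆‖) := by
          gcongr; exact norm_lie_cfc_mul_inv_add_sq_le ha (by positivity) b
      _ = 9 / 4 * ‖⁅a, b⁆‖ * (t ^ (-s) * (1 + t)⁻¹) := by ring
  refine le_of_mul_le_mul_left ?_ hC
  calc C * ‖⁅cfc (fun x : ℝ => x * (1 + x ^ 2) ^ (-s)) a, b⁆‖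
      = ‖∫ t in Ioi (0 : ℝ), ⁅cfc (fun x : ℝ => t ^ (-s) * (x * (1 + t + x ^ 2)⁻¹)) a, b⁆‖ := by
        rw [← hlie, norm_smul, Real.norm_of_nonneg hC.le]
    _ ≤ ∫ t in Ioi (0 : ℝ), 9 / 4 * ‖⁅a, b⁆‖ * (t ^ (-s) * (1 + t)⁻¹) :=
        norm_integral_le_of_norm_le ((integrableOn_rpow_neg_mul_inv_one_add hs0 hs1).const_mul _)
          (ae_restrict_of_forall_mem measurableSet_Ioi hterm)
    _ = C * (9 / 4 * ‖⁅a, b⁆‖) := by rw [integral_const_mul, mul_comm]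

end CStarAlgebra

/-- Lipschitz regularization of the Dirac operator: for `0 < ρ < 1` and
`f(λ) = λ(1+λ²)^{-ρ/2}`, there is a constant `K` (depending only on `ρ`) such that
for any self-adjoint invertible operator `D` and any self-adjoint `H`,
`‖[f(D), H]‖ ≤ K ‖[D,H]‖`; in particular any `D`-differentiable `H` is
`f(D)`-differentiable. -/
theorem stmt_9 (ρ : ℝ) (hρ0 : 0 < ρ) (hρ1 : ρ < 1) :
    ∃ K : ℝ, 0 < K ∧
      ∀ (E : Type) (_ : NormedAddCommGroup E) (_ : InnerProductSpace ℂ E)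
        (_ : CompleteSpace E) (D H : E →L[ℂ] E),
        IsSelfAdjoint D → IsUnit D → IsSelfAdjoint H →
        ‖cfc (fun x : ℝ => x * (1 + x ^ 2) ^ (-(ρ / 2)) : ℝ → ℝ) D * H
            - H * cfc (fun x : ℝ => x * (1 + x ^ 2) ^ (-(ρ / 2)) : ℝ → ℝ) D‖
          ≤ K * ‖D * H - H * D‖ := by
  refine ⟨9 / 4, by norm_num, fun E _ _ _ D H hD _ _ => ?_⟩
  simpa only [Ring.lie_def] using
    norm_lie_cfc_mul_one_add_sq_rpow_neg_le hD (by linarith : 0 < ρ / 2) (by linarith) H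
end

section
/- Let P₊, P₋ be projections in a semifinite von Neumann algebra (N, T) with P₋ − F P₊ F* ∈ K_T for a unitary F ∈ N. Then Ker(P₊F*P₋) ∩ P₋ = (F(1−P₊)F*) ∧ P₋ and Ker(P₋FP₊) ∩ P₊ = F*((1−P₋) ∧ (FP₊F*))F, and consequently the skew-corner index T-Ind_{P₊·P₋}(P₊F*P₋) = T(P₋ ∧ F(1−P₊)F*) − T((1−P₋) ∧ FP₊F*). -/
/-!
On `range P` the operator `Q ∘ V ∘ P` acts as `Q ∘ V`, so its kernel there is the preimage
`V⁻¹(ker Q) = V⁻¹(range (1 - Q))`; for the unitary `V = F*` (resp. `F`) this preimage is the image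
under `F` (resp. `F*`). The index formula follows since a function of subspaces invariant under
images by `F` is also invariant under images by `F⁻¹ = F*`.
-/

namespace LinearMap

variable {R M N : Type*}

theorem ker_comp_inf_range_of_isIdempotentElem [Semiring R] [AddCommMonoid M] [Module R M]
    [AddCommMonoid N] [Module R N] {P : M →ₗ[R] M} (hP : IsIdempotentElem P) (f : M →ₗ[R] N) :
    ker (f ∘ₗ P) ⊓ range P = ker f ⊓ range P := by
  ext x
  simp only [Submodule.mem_inf, mem_ker, comp_apply, and_congr_left_iff]
  intro hx
  rw [(IsIdempotentElem.mem_range_iff hP).mp hx]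

theorem ker_comp_equiv_comp_inf_range [Ring R] [AddCommGroup M] [Module R M]
    [AddCommGroup N] [Module R N] {P : M →ₗ[R] M} (hP : IsIdempotentElem P) (e : M ≃ₗ[R] N)
    {Q : N →ₗ[R] N} (hQ : IsIdempotentElem Q) :
    ker (Q ∘ₗ (e : M →ₗ[R] N) ∘ₗ P) ⊓ range P
      = (range (1 - Q)).map (e.symm : N →ₗ[R] M) ⊓ range P := by
  rw [← comp_assoc, ker_comp_inf_range_of_isIdempotentElem hP, ker_comp,
    IsIdempotentElem.ker_eq_range_one_sub hQ, Submodule.comap_equiv_eq_map_symm]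

end LinearMap

namespace Submodule

variable {R M N : Type*} [Semiring R] [AddCommMonoid M] [Module R M] [AddCommMonoid N]
  [Module R N]

theorem map_symm_inf_map (e : M ≃ₗ[R] N) (A : Submodule R N) (B : Submodule R M) :
    (A ⊓ B.map (e : M →ₗ[R] N)).map (e.symm : N →ₗ[R] M) = A.map (e.symm : N →ₗ[R] M) ⊓ B := by
  rw [← comap_equiv_eq_map_symm, ← comap_equiv_eq_map_symm, comap_inf,
    comap_map_eq_of_injective e.injective]

theorem apply_map_symm_eq_of_map_invariant {α : Type*} {f : Submodule R M → α} (e : M ≃ₗ[R] M)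
    (hf : ∀ K, f (K.map (e : M →ₗ[R] M)) = f K) (K : Submodule R M) :
    f (K.map (e.symm : M →ₗ[R] M)) = f K := by
  rw [← hf, (map_symm_eq_iff e).mp rfl]

end Submodule

theorem stmt_16_general {E : Type*} [NormedAddCommGroup E] [InnerProductSpace ℂ E]
    [CompleteSpace E]
    (Pp Pm F : E →L[ℂ] E)
    (hPp : IsIdempotentElem Pp)
    (hPm : IsIdempotentElem Pm)
    (hF : star F * F = 1) (hF' : F * star F = 1)
    (τ : Submodule ℂ E → ℝ)
    (hτ : ∀ K : Submodule ℂ E, τ (K.map (F : E →ₗ[ℂ] E)) = τ K) :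
    (LinearMap.ker ((Pp ∘L star F ∘L Pm : E →L[ℂ] E) : E →ₗ[ℂ] E) ⊓ LinearMap.range (Pm : E →ₗ[ℂ] E)
        = (LinearMap.range ((1 - Pp : E →L[ℂ] E) : E →ₗ[ℂ] E)).map (F : E →ₗ[ℂ] E) ⊓ LinearMap.range (Pm : E →ₗ[ℂ] E)) ∧
    (LinearMap.ker ((Pm ∘L F ∘L Pp : E →L[ℂ] E) : E →ₗ[ℂ] E) ⊓ LinearMap.range (Pp : E →ₗ[ℂ] E)
        = (LinearMap.range ((1 - Pm : E →L[ℂ] E) : E →ₗ[ℂ] E) ⊓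
            (LinearMap.range (Pp : E →ₗ[ℂ] E)).map (F : E →ₗ[ℂ] E)).map
              ((star F : E →L[ℂ] E) : E →ₗ[ℂ] E)) ∧
    (τ (LinearMap.ker ((Pp ∘L star F ∘L Pm : E →L[ℂ] E) : E →ₗ[ℂ] E) ⊓ LinearMap.range (Pm : E →ₗ[ℂ] E))
        - τ (LinearMap.ker ((Pm ∘L F ∘L Pp : E →L[ℂ] E) : E →ₗ[ℂ] E) ⊓ LinearMap.range (Pp : E →ₗ[ℂ] E))
      = τ ((LinearMap.range ((1 - Pp : E →L[ℂ] E) : E →ₗ[ℂ] E)).map (F : E →ₗ[ℂ] E) ⊓ LinearMap.range (Pm : E →ₗ[ℂ] E))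
        - τ (LinearMap.range ((1 - Pm : E →L[ℂ] E) : E →ₗ[ℂ] E) ⊓ (LinearMap.range (Pp : E →ₗ[ℂ] E)).map (F : E →ₗ[ℂ] E))) := by
  -- `U` and `U.symm` coerce definitionally to `F` and `star F`, so `e₁`, `e₂` close the goals as stated.
  let U : E ≃ₗ[ℂ] E :=
    (Unitary.linearIsometryEquiv ⟨F, Unitary.mem_iff.mpr ⟨hF, hF'⟩⟩).toLinearEquiv
  have hPp' := ContinuousLinearMap.IsIdempotentElem.toLinearMap hPp
  have hPm' := ContinuousLinearMap.IsIdempotentElem.toLinearMap hPm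
  have e₁ := LinearMap.ker_comp_equiv_comp_inf_range hPm' U.symm hPp'
  have e₂ := LinearMap.ker_comp_equiv_comp_inf_range hPp' U hPm'
  rw [← Submodule.map_symm_inf_map U] at e₂
  refine ⟨e₁, e₂, congrArg₂ (· - ·) (congrArg τ e₁) ?_⟩
  exact (congrArg τ e₂).trans (Submodule.apply_map_symm_eq_of_map_invariant U hτ _)

/-- Kernel identifications for the skew-corner index: if `P₊, P₋` are projections and
`F` is unitary with `P₋ - F P₊ F*` compact, then
`Ker(P₊F*P₋) ∩ P₋ = (F(1-P₊)F*) ∧ P₋` and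
`Ker(P₋FP₊) ∩ P₊ = F*((1-P₋) ∧ FP₊F*)F`; consequently, for any unitarily invariant
dimension function `τ` on closed subspaces, the skew-corner index satisfies
`T-Ind_{P₊·P₋}(P₊F*P₋) = τ(P₋ ∧ F(1-P₊)F*) - τ((1-P₋) ∧ FP₊F*)`. -/
theorem stmt_16 {E : Type*} [NormedAddCommGroup E] [InnerProductSpace ℂ E]
    [CompleteSpace E]
    (Pp Pm F : E →L[ℂ] E)
    (hPp : IsIdempotentElem Pp) (hPpsa : IsSelfAdjoint Pp)
    (hPm : IsIdempotentElem Pm) (hPmsa : IsSelfAdjoint Pm)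
    (hF : star F * F = 1) (hF' : F * star F = 1)
    (hcpt : IsCompactOperator ((Pm - F * Pp * star F : E →L[ℂ] E) : E → E))
    (τ : Submodule ℂ E → ℝ)
    (hτ : ∀ K : Submodule ℂ E, τ (K.map (F : E →ₗ[ℂ] E)) = τ K) :
    (LinearMap.ker ((Pp ∘L star F ∘L Pm : E →L[ℂ] E) : E →ₗ[ℂ] E) ⊓ LinearMap.range (Pm : E →ₗ[ℂ] E)
        = (LinearMap.range ((1 - Pp : E →L[ℂ] E) : E →ₗ[ℂ] E)).map (F : E →ₗ[ℂ] E) ⊓ LinearMap.range (Pm : E →ₗ[ℂ] E)) ∧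
    (LinearMap.ker ((Pm ∘L F ∘L Pp : E →L[ℂ] E) : E →ₗ[ℂ] E) ⊓ LinearMap.range (Pp : E →ₗ[ℂ] E)
        = (LinearMap.range ((1 - Pm : E →L[ℂ] E) : E →ₗ[ℂ] E) ⊓
            (LinearMap.range (Pp : E →ₗ[ℂ] E)).map (F : E →ₗ[ℂ] E)).map
              ((star F : E →L[ℂ] E) : E →ₗ[ℂ] E)) ∧
    (τ (LinearMap.ker ((Pp ∘L star F ∘L Pm : E →L[ℂ] E) : E →ₗ[ℂ] E) ⊓ LinearMap.range (Pm : E →ₗ[ℂ] E))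
        - τ (LinearMap.ker ((Pm ∘L F ∘L Pp : E →L[ℂ] E) : E →ₗ[ℂ] E) ⊓ LinearMap.range (Pp : E →ₗ[ℂ] E))
      = τ ((LinearMap.range ((1 - Pp : E →L[ℂ] E) : E →ₗ[ℂ] E)).map (F : E →ₗ[ℂ] E) ⊓ LinearMap.range (Pm : E →ₗ[ℂ] E))
        - τ (LinearMap.range ((1 - Pm : E →L[ℂ] E) : E →ₗ[ℂ] E) ⊓ (LinearMap.range (Pp : E →ₗ[ℂ] E)).map (F : E →ₗ[ℂ] E))) :=
  stmt_16_general Pp Pm F hPp hPm hF hF' τ hτ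
end
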